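/- Let (X,𝒳) be a measurable space and P a Markov kernel on X with invariant probability π. Let n ≥ 1, c ∈ ℝ₊ⁿ, f ∈ BD(Xⁿ,c), and for 0 ≤ i ≤ n−2 define g_{i,π}(x_0,…,x_i) = E_π[f(x_0,…,x_i, X_1,…,X_{n-1-i})], with g_{n-1,π} = f. Then for all 1 ≤ i ≤ j ≤ n−1 and all (x_0,…,x_j) ∈ X^{j+1}: |g_{j,π}(x_0,…,x_j) − g_{i-1,π}(x_0,…,x_{i-1})| ≤ Σ_{k=i}^{j} c_k. -/

import Mathlib

open MeasureTheory ProbabilityTheory ENNReal Set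
open scoped Classical

noncomputable section

namespace QMD

variable {𝓧 : Type*} [MeasurableSpace 𝓧]

/-- `BD 𝓧 n c` : the set of measurable functions `f : 𝓧ⁿ → ℝ` with bounded differences `c`,
i.e. `|f x - f y| ≤ ∑ i, c i · 1{x i ≠ y i}`. -/
def BD (𝓧 : Type*) [MeasurableSpace 𝓧] (n : ℕ) (c : Fin n → ℝ) :
    Set ((Fin n → 𝓧) → ℝ) :=
  {f | Measurable f ∧
    ∀ x y : Fin n → 𝓧, |f x - f y| ≤ ∑ i, if x i = y i then 0 else c i}

/-- Prepend a point to a path. -/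
def cons0 (x : 𝓧) (ω : ℕ → 𝓧) : ℕ → 𝓧 := fun n => Nat.casesOn n x ω

/-- `IsMarkovFamily P μm` : for every initial probability distribution `ξ`,
`μm ξ` is the law `P_ξ` on the canonical space `ℕ → 𝓧` of the Markov chain with
kernel `P` and initial distribution `ξ`; this is characterized by the fact that
`μm ξ` is a probability measure and by the one-step disintegration
`P_ξ = ∫ (law of (x, X_0, X_1, …) with (X_k) ∼ P_{P(x,·)}) ξ(dx)`. -/
def IsMarkovFamily (P : Kernel 𝓧 𝓧) (μm : Measure 𝓧 → Measure (ℕ → 𝓧)) : Prop :=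
  (∀ ξ : Measure 𝓧, IsProbabilityMeasure ξ → IsProbabilityMeasure (μm ξ)) ∧
  ∀ ξ : Measure 𝓧, IsProbabilityMeasure ξ →
    μm ξ = ξ.bind fun x => (μm (P x)).map (cons0 x)

/-- Total variation distance between two measures. -/
noncomputable def dTV (ξ ξ' : Measure 𝓧) : ℝ :=
  ⨆ A : {A : Set 𝓧 // MeasurableSet A}, |(ξ A.1).toReal - (ξ' A.1).toReal|

/-- The natural filtration `𝓕_i = σ(X_0, …, X_i)` on the canonical space. -/
def Fil (𝓧 : Type*) [MeasurableSpace 𝓧] (i : ℕ) : MeasurableSpace (ℕ → 𝓧) :=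
  MeasurableSpace.comap (fun ω (k : Fin (i + 1)) => ω (k : ℕ)) inferInstance

/-- The σ-algebra `𝓕_τ` associated with a (stopping) time `τ`. -/
def stoppedSA (τ : (ℕ → 𝓧) → ℕ∞) : MeasurableSpace (ℕ → 𝓧) :=
  MeasurableSpace.generateFrom
    {A | ∀ m : ℕ, MeasurableSet[Fil 𝓧 m] (A ∩ {ω | τ ω ≤ (m : ℕ∞)})}

/-- `hitTime C i ω = τ_C^i(ω) = inf {m ≥ i : ω m ∈ C}` (`⊤` if `C` is never hit after `i`). -/
noncomputable def hitTime (C : Set 𝓧) (i : ℕ) (ω : ℕ → 𝓧) : ℕ∞ :=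
  ⨅ (m : ℕ) (_ : i ≤ m ∧ ω m ∈ C), (m : ℕ∞)

/-- The return time `σ_C = inf {m ≥ 1 : ω m ∈ C}`. -/
noncomputable def retTime (C : Set 𝓧) : (ℕ → 𝓧) → ℕ∞ := hitTime C 1

/-- The shift operator `θ` on the canonical space. -/
def shift (ω : ℕ → 𝓧) : ℕ → 𝓧 := fun k => ω (k + 1)

/-- `geomPow b m = b ^ m ∈ [0,∞]` for an extended natural exponent `m` (for a base `b > 1`). -/
noncomputable def geomPow (b : ℝ) (m : ℕ∞) : ℝ≥0∞ :=
  if m = ⊤ then ⊤ else ENNReal.ofReal (b ^ m.toNat)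

/-- Iterates of a kernel. -/
noncomputable def kpow (P : Kernel 𝓧 𝓧) : ℕ → Kernel 𝓧 𝓧
  | 0 => Kernel.id
  | m + 1 => P.comp (kpow P m)

/-- `P` is irreducible and aperiodic: there is a nonzero measure `ψ` such that any
`ψ`-positive set is reached with positive probability at all large enough times,
from every starting point. -/
def IrreducibleAperiodic (P : Kernel 𝓧 𝓧) : Prop :=
  ∃ ψ : Measure 𝓧, ψ ≠ 0 ∧ ∀ (x : 𝓧) (A : Set 𝓧), MeasurableSet A → ψ A ≠ 0 →
    ∃ N : ℕ, ∀ m ≥ N, kpow P m x A ≠ 0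

/-- `pad n i x* v` : the vector in `𝓧ⁿ` whose first `i` coordinates are `x*`,
followed by `v 0, v 1, …`. -/
def pad (n i : ℕ) (xstar : 𝓧) (v : ℕ → 𝓧) : Fin n → 𝓧 :=
  fun k => if (k : ℕ) < i then xstar else v ((k : ℕ) - i)

/-- `padAt n i x* ω` : the vector `(x*, …, x*, ω i, ω (i+1), …, ω (n-1))` (with `i`
copies of `x*`). -/
def padAt (n i : ℕ) (xstar : 𝓧) (ω : ℕ → 𝓧) : Fin n → 𝓧 :=
  fun k => if (k : ℕ) < i then xstar else ω (k : ℕ)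

/-- `g_i(x_0,…,x_i) = E_{x_i}[f(x_0,…,x_i, X_1,…,X_{n-1-i})]`. -/
noncomputable def gfun (μm : Measure 𝓧 → Measure (ℕ → 𝓧)) {n : ℕ}
    (f : (Fin n → 𝓧) → ℝ) (i : Fin n) (v : Fin n → 𝓧) : ℝ :=
  ∫ ω, f (fun k => if (k : ℕ) ≤ (i : ℕ) then v k else ω ((k : ℕ) - (i : ℕ)))
    ∂(μm (Measure.dirac (v i)))

/-- `g_{i,π}(x_0,…,x_i) = E_π[f(x_0,…,x_i, X_1,…,X_{n-1-i})]`. -/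
noncomputable def gfunPi (μm : Measure 𝓧 → Measure (ℕ → 𝓧)) (π : Measure 𝓧) {n : ℕ}
    (f : (Fin n → 𝓧) → ℝ) (i : Fin n) (v : Fin n → 𝓧) : ℝ :=
  ∫ ω, f (fun k => if (k : ℕ) ≤ (i : ℕ) then v k else ω ((k : ℕ) - (i : ℕ))) ∂(μm π)

/-- `G_i = E_x[ f(X_0,…,X_{n-1}) | 𝓕_{τ_C^i} ]`. -/
noncomputable def Gfun (μm : Measure 𝓧 → Measure (ℕ → 𝓧)) (C : Set 𝓧) {n : ℕ}
    (f : (Fin n → 𝓧) → ℝ) (x : 𝓧) (i : ℕ) : (ℕ → 𝓧) → ℝ :=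
  (μm (Measure.dirac x))[(fun ω => f (fun k => ω (k : ℕ))) | stoppedSA (hitTime C i)]

/- ===== auxiliary lemmas for gfunPi_diff_le ===== -/

lemma measurable_cons0 (x : 𝓧) : Measurable (cons0 x : (ℕ → 𝓧) → ℕ → 𝓧) := by
  apply measurable_pi_lambda
  intro k
  cases k with
  | zero => exact measurable_const
  | succ m => exact measurable_pi_apply m

lemma bind_apply_ae {α β : Type*} [MeasurableSpace α] [MeasurableSpace β]
    {m : Measure α} {f : α → Measure β} {s : Set β} (hs : MeasurableSet s)
    (hf : AEMeasurable f m) : m.bind f s = ∫⁻ a, f a s ∂m := by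
  rw [Measure.bind, Measure.join_apply hs,
    lintegral_map' (Measure.measurable_coe hs).aemeasurable hf]

lemma IsMarkovFamily.aemeas {P : Kernel 𝓧 𝓧} {μm : Measure 𝓧 → Measure (ℕ → 𝓧)}
    (hμm : IsMarkovFamily P μm) (ξ : Measure 𝓧) (hξ : IsProbabilityMeasure ξ) :
    AEMeasurable (fun x => (μm (P x)).map (cons0 x)) ξ := by
  by_contra h
  have h1 := hμm.2 ξ hξ
  rw [Measure.bind, Measure.map_of_not_aemeasurable h, Measure.join_zero] at h1
  have h2 := (hμm.1 ξ hξ).measure_univ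
  rw [h1] at h2
  simp at h2

lemma measurable_consFun {M : ℕ} :
    Measurable (fun p : 𝓧 × (Fin (M + 1) → 𝓧) => (Fin.cons p.1 p.2 : Fin (M + 2) → 𝓧)) := by
  apply measurable_pi_lambda
  intro k
  refine Fin.cases ?_ (fun l => ?_) k
  · simpa using measurable_fst
  · simpa using (show Measurable fun c : 𝓧 × (Fin (M + 1) → 𝓧) => c.2 l from (measurable_pi_apply l).comp measurable_snd)

lemma measurable_finCons {M : ℕ} (x : 𝓧) :
    Measurable (fun w : Fin (M + 1) → 𝓧 => (Fin.cons x w : Fin (M + 2) → 𝓧)) :=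
  measurable_consFun.comp measurable_prodMk_left

/-- Finite-dimensional distribution kernel of the chain: `fdd P M x` is the law of
`(X_0, …, X_M)` starting at `x`. -/
noncomputable def fdd (P : Kernel 𝓧 𝓧) : (M : ℕ) → Kernel 𝓧 (Fin (M + 1) → 𝓧)
  | 0 => Kernel.deterministic (fun x (_ : Fin 1) => x)
      (measurable_pi_lambda _ fun _ => measurable_id)
  | M + 1 => Kernel.map (Kernel.id ×ₖ ((fdd P M) ∘ₖ P))
      (fun p : 𝓧 × (Fin (M + 1) → 𝓧) => Fin.cons p.1 p.2)

lemma fdd_markov (P : Kernel 𝓧 𝓧) [IsMarkovKernel P] (M : ℕ) : IsMarkovKernel (fdd P M) := by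
  induction M with
  | zero => rw [fdd]; infer_instance
  | succ M ih =>
    rw [fdd]
    haveI := ih
    exact Kernel.IsMarkovKernel.map _ measurable_consFun

lemma fdd_succ_apply (P : Kernel 𝓧 𝓧) [IsMarkovKernel P] (M : ℕ) (x : 𝓧) :
    fdd P (M + 1) x = ((P x).bind (fdd P M)).map (Fin.cons x) := by
  haveI := fdd_markov P M
  haveI : IsProbabilityMeasure ((P x).bind ⇑(fdd P M)) := by
    constructor
    rw [Measure.bind_apply MeasurableSet.univ (fdd P M).measurable.aemeasurable]
    simp
  rw [fdd, Kernel.map_apply _ measurable_consFun, Kernel.prod_apply, Kernel.id_apply,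
    Kernel.comp_apply, Measure.dirac_prod,
    Measure.map_map measurable_consFun measurable_prodMk_left]
  rfl

lemma law_coord_zero {P : Kernel 𝓧 𝓧} [IsMarkovKernel P] {μm : Measure 𝓧 → Measure (ℕ → 𝓧)}
    (hμm : IsMarkovFamily P μm) (ξ : Measure 𝓧) (hξ : IsProbabilityMeasure ξ) :
    (μm ξ).map (fun ω : ℕ → 𝓧 => ω 0) = ξ := by
  ext S hS
  have h0 : Measurable (fun ω : ℕ → 𝓧 => ω 0) := measurable_pi_apply 0
  rw [Measure.map_apply h0 hS, hμm.2 ξ hξ, bind_apply_ae (h0 hS) (hμm.aemeas ξ hξ)]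
  have hint : ∀ x, ((μm (P x)).map (cons0 x)) ((fun ω : ℕ → 𝓧 => ω 0) ⁻¹' S)
      = S.indicator 1 x := by
    intro x
    haveI := hμm.1 (P x) inferInstance
    rw [Measure.map_apply (measurable_cons0 x) (h0 hS)]
    have hpre : cons0 x ⁻¹' ((fun ω : ℕ → 𝓧 => ω 0) ⁻¹' S) = if x ∈ S then univ else ∅ := by
      split_ifs with h <;> ext ω <;> simp [cons0, h]
    rw [hpre]
    split_ifs with h <;> simp [h]
  rw [lintegral_congr hint, lintegral_indicator_one hS]

lemma law_block_zero {P : Kernel 𝓧 𝓧} [IsMarkovKernel P] {μm : Measure 𝓧 → Measure (ℕ → 𝓧)}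
    (hμm : IsMarkovFamily P μm) (M : ℕ) :
    ∀ (ξ : Measure 𝓧), IsProbabilityMeasure ξ →
      (μm ξ).map (fun ω : ℕ → 𝓧 => fun k : Fin (M + 1) => ω (k : ℕ)) = ξ.bind (fdd P M) := by
  induction M with
  | zero =>
    intro ξ hξ
    have hdiag : Measurable (fun x : 𝓧 => fun _ : Fin 1 => x) :=
      measurable_pi_lambda _ fun _ => measurable_id
    have hV : (fun ω : ℕ → 𝓧 => fun k : Fin 1 => ω (k : ℕ))
        = (fun x : 𝓧 => fun _ : Fin 1 => x) ∘ (fun ω : ℕ → 𝓧 => ω 0) := by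
      funext ω k
      simp [show (k : ℕ) = 0 by omega]
    have hfdd : ⇑(fdd P 0) = fun x : 𝓧 => Measure.dirac (fun _ : Fin 1 => x) := by
      funext x
      rw [fdd, Kernel.deterministic_apply]
    rw [hV, ← Measure.map_map hdiag (measurable_pi_apply 0), law_coord_zero hμm ξ hξ, hfdd,
      Measure.bind_dirac_eq_map ξ hdiag]
  | succ M ih =>
    intro ξ hξ
    haveI := fdd_markov P (M + 1)
    have hV : Measurable (fun ω : ℕ → 𝓧 => fun k : Fin (M + 2) => ω (k : ℕ)) :=
      measurable_pi_lambda _ fun k => measurable_pi_apply _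
    have hV' : Measurable (fun ω : ℕ → 𝓧 => fun k : Fin (M + 1) => ω (k : ℕ)) :=
      measurable_pi_lambda _ fun k => measurable_pi_apply _
    ext S hS
    rw [Measure.map_apply hV hS, hμm.2 ξ hξ, bind_apply_ae (hV hS) (hμm.aemeas ξ hξ),
      Measure.bind_apply hS (fdd P (M + 1)).measurable.aemeasurable]
    refine lintegral_congr fun x => ?_
    haveI : IsProbabilityMeasure (μm (P x)) := hμm.1 (P x) inferInstance
    have hcomp : (fun ω : ℕ → 𝓧 => cons0 x ω) ⁻¹'
          ((fun ω : ℕ → 𝓧 => fun k : Fin (M + 2) => ω (k : ℕ)) ⁻¹' S)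
        = (fun ω : ℕ → 𝓧 => fun k : Fin (M + 1) => ω (k : ℕ)) ⁻¹'
          ((fun w : Fin (M + 1) → 𝓧 => (Fin.cons x w : Fin (M + 2) → 𝓧)) ⁻¹' S) := by
      ext ω
      simp only [Set.mem_preimage]
      have : (fun k : Fin (M + 2) => cons0 x ω (k : ℕ))
          = Fin.cons x (fun k : Fin (M + 1) => ω (k : ℕ)) := by
        funext k
        refine Fin.cases ?_ (fun l => ?_) k
        · rfl
        · rfl
      rw [this]
    rw [Measure.map_apply (measurable_cons0 x) (hV hS), hcomp,
      ← Measure.map_apply hV' ((measurable_finCons x) hS),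
      ih (P x) inferInstance,
      fdd_succ_apply P M x, Measure.map_apply (measurable_finCons x) hS]

lemma law_block_one {P : Kernel 𝓧 𝓧} [IsMarkovKernel P] {μm : Measure 𝓧 → Measure (ℕ → 𝓧)}
    (hμm : IsMarkovFamily P μm) (M : ℕ) (ξ : Measure 𝓧) (hξ : IsProbabilityMeasure ξ) :
    (μm ξ).map (fun ω : ℕ → 𝓧 => fun k : Fin (M + 1) => ω ((k : ℕ) + 1))
      = (ξ.bind ⇑P).bind (fdd P M) := by
  haveI := fdd_markov P M
  have hW : Measurable (fun ω : ℕ → 𝓧 => fun k : Fin (M + 1) => ω ((k : ℕ) + 1)) :=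
    measurable_pi_lambda _ fun k => measurable_pi_apply _
  have hV' : Measurable (fun ω : ℕ → 𝓧 => fun k : Fin (M + 1) => ω (k : ℕ)) :=
    measurable_pi_lambda _ fun k => measurable_pi_apply _
  ext S hS
  have hmeas : Measurable (fun a : 𝓧 => (P a).bind ⇑(fdd P M)) :=
    (Measure.measurable_bind' (fdd P M).measurable).comp P.measurable
  rw [Measure.map_apply hW hS, hμm.2 ξ hξ, bind_apply_ae (hW hS) (hμm.aemeas ξ hξ),
    Measure.bind_bind P.measurable.aemeasurable (fdd P M).measurable.aemeasurable,
    Measure.bind_apply hS hmeas.aemeasurable]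
  refine lintegral_congr fun x => ?_
  have hcomp : (fun ω : ℕ → 𝓧 => cons0 x ω) ⁻¹'
        ((fun ω : ℕ → 𝓧 => fun k : Fin (M + 1) => ω ((k : ℕ) + 1)) ⁻¹' S)
      = (fun ω : ℕ → 𝓧 => fun k : Fin (M + 1) => ω (k : ℕ)) ⁻¹' S := by
    ext ω
    simp only [Set.mem_preimage]
    have : (fun k : Fin (M + 1) => cons0 x ω ((k : ℕ) + 1))
        = fun k : Fin (M + 1) => ω (k : ℕ) := rfl
    rw [this]
  rw [Measure.map_apply (measurable_cons0 x) (hW hS), hcomp,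
    ← Measure.map_apply hV' hS, law_block_zero hμm M (P x) inferInstance]

lemma law_shift_eq {P : Kernel 𝓧 𝓧} [IsMarkovKernel P] {μm : Measure 𝓧 → Measure (ℕ → 𝓧)}
    (hμm : IsMarkovFamily P μm) {π : Measure 𝓧} [IsProbabilityMeasure π]
    (hInv : Kernel.Invariant P π) (M : ℕ) :
    (μm π).map (fun ω : ℕ → 𝓧 => fun k : Fin (M + 1) => ω ((k : ℕ) + 1))
      = (μm π).map (fun ω : ℕ → 𝓧 => fun k : Fin (M + 1) => ω (k : ℕ)) := by
  rw [law_block_one hμm M π inferInstance, law_block_zero hμm M π inferInstance, hInv.def]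

lemma law_block_offset {P : Kernel 𝓧 𝓧} [IsMarkovKernel P] {μm : Measure 𝓧 → Measure (ℕ → 𝓧)}
    (hμm : IsMarkovFamily P μm) {π : Measure 𝓧} [IsProbabilityMeasure π]
    (hInv : Kernel.Invariant P π) (N : ℕ) (a : ℕ) :
    (μm π).map (fun ω : ℕ → 𝓧 => fun k : Fin N => ω (a + (k : ℕ)))
      = (μm π).map (fun ω : ℕ → 𝓧 => fun k : Fin N => ω (k : ℕ)) := by
  cases N with
  | zero =>
    congr 1
    funext ω k
    exact k.elim0
  | succ M =>
    induction a with
    | zero => simp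
    | succ a ih =>
      have hproj : Measurable (fun w : Fin (a + M + 1) → 𝓧 =>
          fun k : Fin (M + 1) => w ⟨a + (k : ℕ), by omega⟩) :=
        measurable_pi_lambda _ fun k => measurable_pi_apply _
      have hW : Measurable (fun ω : ℕ → 𝓧 => fun k : Fin (a + M + 1) => ω ((k : ℕ) + 1)) :=
        measurable_pi_lambda _ fun k => measurable_pi_apply _
      have hV : Measurable (fun ω : ℕ → 𝓧 => fun k : Fin (a + M + 1) => ω (k : ℕ)) :=
        measurable_pi_lambda _ fun k => measurable_pi_apply _
      calc (μm π).map (fun ω : ℕ → 𝓧 => fun k : Fin (M + 1) => ω (a + 1 + (k : ℕ)))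
          = ((μm π).map (fun ω : ℕ → 𝓧 => fun k : Fin (a + M + 1) => ω ((k : ℕ) + 1))).map
              (fun w : Fin (a + M + 1) → 𝓧 => fun k : Fin (M + 1) => w ⟨a + (k : ℕ), by omega⟩) := by
            rw [Measure.map_map hproj hW]
            congr 1
            funext ω k
            show ω (a + 1 + (k : ℕ)) = ω (a + (k : ℕ) + 1)
            exact congrArg ω (by omega)
        _ = ((μm π).map (fun ω : ℕ → 𝓧 => fun k : Fin (a + M + 1) => ω (k : ℕ))).map
              (fun w : Fin (a + M + 1) → 𝓧 => fun k : Fin (M + 1) => w ⟨a + (k : ℕ), by omega⟩) := by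
            rw [law_shift_eq hμm hInv (a + M)]
        _ = (μm π).map (fun ω : ℕ → 𝓧 => fun k : Fin (M + 1) => ω (a + (k : ℕ))) := by
            rw [Measure.map_map hproj hV]
            rfl
        _ = (μm π).map (fun ω : ℕ → 𝓧 => fun k : Fin (M + 1) => ω (k : ℕ)) := ih

/-- For the invariant initial distribution,
`|g_{j,π}(x_0,…,x_j) − g_{i-1,π}(x_0,…,x_{i-1})| ≤ ∑_{k=i}^j c_k`. -/
theorem gfunPi_diff_le
    {𝓧 : Type*} [MeasurableSpace 𝓧] (P : Kernel 𝓧 𝓧) [IsMarkovKernel P]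
    (μm : Measure 𝓧 → Measure (ℕ → 𝓧)) (hμm : IsMarkovFamily P μm)
    (π : Measure 𝓧) [IsProbabilityMeasure π] (hInv : Kernel.Invariant P π)
    (n : ℕ) (hn : 1 ≤ n) (c : Fin n → ℝ) (hc : ∀ i, 0 ≤ c i)
    (f : (Fin n → 𝓧) → ℝ) (hf : f ∈ BD 𝓧 n c) :
    ∀ (i j : Fin n), 1 ≤ (i : ℕ) → i ≤ j → ∀ v : Fin n → 𝓧,
      |gfunPi μm π f j v
          - gfunPi μm π f ⟨(i : ℕ) - 1, lt_of_le_of_lt (Nat.sub_le _ _) i.isLt⟩ v|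
        ≤ ∑ k : Fin n, if (i : ℕ) ≤ (k : ℕ) ∧ (k : ℕ) ≤ (j : ℕ) then c k else 0 := by
  intro i j hi1 hij v
  obtain ⟨hfm, hfb⟩ := hf
  haveI : IsProbabilityMeasure (μm π) := hμm.1 π inferInstance
  set p : ℕ := (i : ℕ) - 1 with hp
  have hpi : p + 1 = (i : ℕ) := by omega
  have hijn : (i : ℕ) ≤ (j : ℕ) := hij
  have hjn : (j : ℕ) < n := j.isLt
  set d : ℕ := (j : ℕ) - p with hd
  set ΨJ : (Fin n → 𝓧) → (Fin n → 𝓧) := fun w k =>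
    if (k : ℕ) ≤ (j : ℕ) then v k else w ⟨(k : ℕ) - (j : ℕ), lt_of_le_of_lt (Nat.sub_le _ _) k.isLt⟩
    with hΨJ
  set ΨP : (Fin n → 𝓧) → (Fin n → 𝓧) := fun w k =>
    if (k : ℕ) ≤ p then v k else w ⟨(k : ℕ) - p, lt_of_le_of_lt (Nat.sub_le _ _) k.isLt⟩
    with hΨP
  have hΨJm : Measurable ΨJ := by
    apply measurable_pi_lambda
    intro k
    by_cases h : (k : ℕ) ≤ (j : ℕ)
    · simp only [hΨJ, h, if_true]; exact measurable_const
    · simp only [hΨJ, h, if_false]; exact measurable_pi_apply _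
  have hΨPm : Measurable ΨP := by
    apply measurable_pi_lambda
    intro k
    by_cases h : (k : ℕ) ≤ p
    · simp only [hΨP, h, if_true]; exact measurable_const
    · simp only [hΨP, h, if_false]; exact measurable_pi_apply _
  have hblock : ∀ a : ℕ, Measurable (fun ω : ℕ → 𝓧 => fun k : Fin n => ω (a + (k : ℕ))) :=
    fun a => measurable_pi_lambda _ fun k => measurable_pi_apply _
  have hgJ : ∀ μ' : Measure (Fin n → 𝓧), AEStronglyMeasurable (fun w => f (ΨJ w)) μ' :=
    fun μ' => (hfm.comp hΨJm).aestronglyMeasurable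
  have keyJ : gfunPi μm π f j v = ∫ ω, f (ΨJ (fun k : Fin n => ω (d + (k : ℕ)))) ∂(μm π) := by
    have e0 : gfunPi μm π f j v = ∫ ω, f (ΨJ (fun k : Fin n => ω (0 + (k : ℕ)))) ∂(μm π) := by
      unfold gfunPi
      congr 1
      funext ω
      congr 1
      funext k
      by_cases h : (k : ℕ) ≤ (j : ℕ)
      · simp only [hΨJ, if_pos h]
      · simp only [hΨJ, if_neg h]
        simp
    calc gfunPi μm π f j v
        = ∫ ω, f (ΨJ (fun k : Fin n => ω (0 + (k : ℕ)))) ∂(μm π) := e0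
      _ = ∫ w, f (ΨJ w) ∂((μm π).map (fun ω : ℕ → 𝓧 => fun k : Fin n => ω (0 + (k : ℕ)))) :=
          (integral_map (hblock 0).aemeasurable (hgJ _)).symm
      _ = ∫ w, f (ΨJ w) ∂((μm π).map (fun ω : ℕ → 𝓧 => fun k : Fin n => ω (d + (k : ℕ)))) := by
          rw [law_block_offset hμm hInv n 0, law_block_offset hμm hInv n d]
      _ = ∫ ω, f (ΨJ (fun k : Fin n => ω (d + (k : ℕ)))) ∂(μm π) :=
          integral_map (hblock d).aemeasurable (hgJ _)
  have keyP : gfunPi μm π f ⟨(i : ℕ) - 1, lt_of_le_of_lt (Nat.sub_le _ _) i.isLt⟩ v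
      = ∫ ω, f (ΨP (fun k : Fin n => ω (0 + (k : ℕ)))) ∂(μm π) := by
    unfold gfunPi
    congr 1
    funext ω
    congr 1
    funext k
    by_cases h : (k : ℕ) ≤ p
    · simp only [hΨP, ← hp, if_pos h]
    · simp only [hΨP, if_neg h]
      simp [← hp, h]
  rw [keyJ, keyP]
  set C : ℝ := |f (fun _ => v i)| + ∑ k : Fin n, c k with hC
  have hfbound : ∀ x : Fin n → 𝓧, |f x| ≤ C := by
    intro x
    have h1 := hfb x (fun _ => v i)
    have h2 : (∑ k : Fin n, if x k = (fun _ : Fin n => v i) k then 0 else c k)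
        ≤ ∑ k : Fin n, c k := by
      apply Finset.sum_le_sum
      intro k _
      split_ifs
      · exact hc k
      · exact le_refl _
    have h3 := abs_sub_abs_le_abs_sub (f x) (f (fun _ => v i))
    rw [hC]
    linarith
  have int1 : Integrable (fun ω : ℕ → 𝓧 => f (ΨJ (fun k : Fin n => ω (d + (k : ℕ))))) (μm π) := by
    refine (integrable_const C).mono'
      ((hfm.comp (hΨJm.comp (hblock d))).aestronglyMeasurable) (ae_of_all _ fun ω => ?_)
    simpa [Real.norm_eq_abs] using hfbound _
  have int2 : Integrable (fun ω : ℕ → 𝓧 => f (ΨP (fun k : Fin n => ω (0 + (k : ℕ))))) (μm π) := by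
    refine (integrable_const C).mono'
      ((hfm.comp (hΨPm.comp (hblock 0))).aestronglyMeasurable) (ae_of_all _ fun ω => ?_)
    simpa [Real.norm_eq_abs] using hfbound _
  rw [← integral_sub int1 int2]
  set S : ℝ := ∑ k : Fin n, if (i : ℕ) ≤ (k : ℕ) ∧ (k : ℕ) ≤ (j : ℕ) then c k else 0 with hS
  have hpt : ∀ ω : ℕ → 𝓧,
      |f (ΨJ (fun k : Fin n => ω (d + (k : ℕ)))) - f (ΨP (fun k : Fin n => ω (0 + (k : ℕ))))|
        ≤ S := by
    intro ω
    refine le_trans (hfb _ _) ?_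
    rw [hS]
    apply Finset.sum_le_sum
    intro k _
    rcases le_or_gt (k : ℕ) p with hk | hk
    · have hkj : (k : ℕ) ≤ (j : ℕ) := by omega
      have heq : ΨJ (fun k : Fin n => ω (d + (k : ℕ))) k
          = ΨP (fun k : Fin n => ω (0 + (k : ℕ))) k := by
        simp only [hΨJ, hΨP, if_pos hkj, if_pos hk]
      have hno : ¬((i : ℕ) ≤ (k : ℕ) ∧ (k : ℕ) ≤ (j : ℕ)) := by omega
      rw [if_pos heq, if_neg hno]
    · rcases le_or_gt (k : ℕ) (j : ℕ) with hkj | hkj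
      · have hyes : (i : ℕ) ≤ (k : ℕ) ∧ (k : ℕ) ≤ (j : ℕ) := by omega
        rw [if_pos hyes]
        split_ifs
        · exact hc k
        · exact le_refl _
      · have h1 : ¬((k : ℕ) ≤ (j : ℕ)) := by omega
        have h2 : ¬((k : ℕ) ≤ p) := by omega
        have heq : ΨJ (fun k : Fin n => ω (d + (k : ℕ))) k
            = ΨP (fun k : Fin n => ω (0 + (k : ℕ))) k := by
          simp only [hΨJ, hΨP, if_neg h1, if_neg h2]
          show ω (d + ((k : ℕ) - (j : ℕ))) = ω (0 + ((k : ℕ) - p))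
          exact congrArg ω (by omega)
        have hno : ¬((i : ℕ) ≤ (k : ℕ) ∧ (k : ℕ) ≤ (j : ℕ)) := by omega
        rw [if_pos heq, if_neg hno]
  calc |∫ ω, (f (ΨJ (fun k : Fin n => ω (d + (k : ℕ))))
          - f (ΨP (fun k : Fin n => ω (0 + (k : ℕ))))) ∂(μm π)|
      ≤ S * ((μm π) Set.univ).toReal := by
        rw [← Real.norm_eq_abs]
        refine norm_integral_le_of_norm_le_const (ae_of_all _ fun ω => ?_)
        rw [Real.norm_eq_abs]
        exact hpt ω
    _ = S := by simp

end QMD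

end
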